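/- Let H be a real Hilbert space and D ⊆ H a symmetric dictionary. Suppose ε ≥ 0, B > 0, and f, f^ε ∈ H satisfy ‖f − f^ε‖ ≤ ε and f^ε/B ∈ A₁(D). Let (f_m, φ_m) be a realization of the Orthogonal Greedy Algorithm applied to f, i.e. f_0 = f and for each m ≥ 1: φ_m ∈ D satisfies |⟨f_{m−1}, φ_m⟩| = sup_{g∈D} |⟨f_{m−1}, g⟩|, and f_m = f − P_{H_m}(f) where P_{H_m} is the orthogonal projection onto H_m := span(φ_1, …, φ_m). Then for every m ≥ 1, ‖f_m‖ ≤ max{ 2ε, 4(B+ε)·(1+m)^{−1/2} }. -/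

import Mathlib

open scoped RealInnerProductSpace

/-- `A₁(D)`: the closure of the convex hull of the (symmetric) dictionary `D`. -/
noncomputable def A1 {H : Type*} [NormedAddCommGroup H] [InnerProductSpace ℝ H]
    (D : Set H) : Set H :=
  closure (convexHull ℝ D)

/-- The orthogonal projection of `x` onto `H_m = span(φ_1, …, φ_m)`,
regarded as an element of `H`. -/
noncomputable def projSpan {H : Type*} [NormedAddCommGroup H] [InnerProductSpace ℝ H]
    [CompleteSpace H] (φ : ℕ → H) (m : ℕ) (x : H) : H :=
  haveI : FiniteDimensional ℝ (Submodule.span ℝ (φ '' Set.Icc 1 m)) :=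
    FiniteDimensional.span_of_finite ℝ ((Set.finite_Icc 1 m).image φ)
  (Submodule.orthogonalProjectionOnto (Submodule.span ℝ (φ '' Set.Icc 1 m)) x : H)



section Aux
variable {H : Type*} [NormedAddCommGroup H] [InnerProductSpace ℝ H] [CompleteSpace H]

lemma norm_sub_proj_le' (K : Submodule ℝ H) [K.HasOrthogonalProjection] (x : H) {w : H}
    (hw : w ∈ K) : ‖x - Submodule.orthogonalProjectionOnto K x‖ ≤ ‖x - w‖ := by
  have h0 : ⟪x - Submodule.orthogonalProjectionOnto K x, (Submodule.orthogonalProjectionOnto K x : H) - w⟫ = 0 :=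
    by rw [← Submodule.starProjection_apply]; exact Submodule.starProjection_inner_eq_zero x _ (Submodule.sub_mem K (Submodule.orthogonalProjectionOnto K x).2 hw)
  have hsplit : x - w = (x - Submodule.orthogonalProjectionOnto K x) + ((Submodule.orthogonalProjectionOnto K x : H) - w) := by
    abel
  have hsq : ‖x - w‖ ^ 2
      = ‖x - Submodule.orthogonalProjectionOnto K x‖ ^ 2 + ‖(Submodule.orthogonalProjectionOnto K x : H) - w‖ ^ 2 := by
    rw [hsplit, norm_add_sq_real, h0]; ring
  nlinarith [norm_nonneg (x - w), norm_nonneg (x - (Submodule.orthogonalProjectionOnto K x : H)),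
    sq_nonneg ‖(Submodule.orthogonalProjectionOnto K x : H) - w‖]

lemma projSpan_eq (φ : ℕ → H) (m : ℕ) (x : H) :
    haveI : FiniteDimensional ℝ (Submodule.span ℝ (φ '' Set.Icc 1 m)) :=
      FiniteDimensional.span_of_finite ℝ ((Set.finite_Icc 1 m).image φ)
    projSpan φ m x = (Submodule.orthogonalProjectionOnto (Submodule.span ℝ (φ '' Set.Icc 1 m)) x : H) := rfl

lemma projSpan_mem (φ : ℕ → H) (m : ℕ) (x : H) :
    projSpan φ m x ∈ Submodule.span ℝ (φ '' Set.Icc 1 m) := by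
  haveI : FiniteDimensional ℝ (Submodule.span ℝ (φ '' Set.Icc 1 m)) :=
    FiniteDimensional.span_of_finite ℝ ((Set.finite_Icc 1 m).image φ)
  rw [projSpan_eq]
  exact (Submodule.orthogonalProjectionOnto _ x).2

lemma projSpan_inner (φ : ℕ → H) (m : ℕ) (x : H) {w : H}
    (hw : w ∈ Submodule.span ℝ (φ '' Set.Icc 1 m)) : ⟪x - projSpan φ m x, w⟫ = 0 := by
  haveI : FiniteDimensional ℝ (Submodule.span ℝ (φ '' Set.Icc 1 m)) :=
    FiniteDimensional.span_of_finite ℝ ((Set.finite_Icc 1 m).image φ)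
  rw [projSpan_eq]
  rw [← Submodule.starProjection_apply]; exact Submodule.starProjection_inner_eq_zero x w hw

lemma projSpan_min (φ : ℕ → H) (m : ℕ) (x : H) {w : H}
    (hw : w ∈ Submodule.span ℝ (φ '' Set.Icc 1 m)) : ‖x - projSpan φ m x‖ ≤ ‖x - w‖ := by
  haveI : FiniteDimensional ℝ (Submodule.span ℝ (φ '' Set.Icc 1 m)) :=
    FiniteDimensional.span_of_finite ℝ ((Set.finite_Icc 1 m).image φ)
  rw [projSpan_eq]
  exact norm_sub_proj_le' _ x hw

lemma projSpan_zero (φ : ℕ → H) (x : H) : projSpan φ 0 x = 0 := by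
  have h := projSpan_mem φ 0 x
  simp only [Set.Icc_eq_empty (by norm_num : ¬ (1:ℕ) ≤ 0), Set.image_empty,
    Submodule.span_empty, Submodule.mem_bot] at h
  exact h

lemma A1_norm_le (D : Set H) (hDnorm : ∀ g ∈ D, ‖g‖ = 1) {x : H} (hx : x ∈ A1 D) : ‖x‖ ≤ 1 := by
  have hsub : A1 D ⊆ Metric.closedBall (0 : H) 1 := by
    apply closure_minimal _ Metric.isClosed_closedBall
    apply convexHull_min _ (convex_closedBall 0 1)
    intro g hg
    simp [hDnorm g hg]
  simpa using hsub hx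

lemma inner_le_sSup_abs (D : Set H) (hDnorm : ∀ g ∈ D, ‖g‖ = 1) (u : H) {x : H}
    (hx : x ∈ A1 D) : ⟪u, x⟫ ≤ sSup {r : ℝ | ∃ g ∈ D, r = |⟪u, g⟫|} := by
  set S := {r : ℝ | ∃ g ∈ D, r = |⟪u, g⟫|} with hS
  have hbdd : BddAbove S := by
    refine ⟨‖u‖, ?_⟩
    rintro r ⟨g, hg, rfl⟩
    calc |⟪u, g⟫| ≤ ‖u‖ * ‖g‖ := abs_real_inner_le_norm u g
      _ = ‖u‖ := by rw [hDnorm g hg, mul_one]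
  have hC : ∀ g ∈ D, ⟪u, g⟫ ≤ sSup S := fun g hg =>
    le_trans (le_abs_self _) (le_csSup hbdd ⟨g, hg, rfl⟩)
  have hconv : Convex ℝ {y : H | ⟪u, y⟫ ≤ sSup S} :=
    convex_halfSpace_le ⟨fun a b => inner_add_right _ _ _, fun c y => real_inner_smul_right u y c⟩ _
  have hclosed : IsClosed {y : H | ⟪u, y⟫ ≤ sSup S} :=
    isClosed_le (continuous_const.inner continuous_id) continuous_const
  have hsub : A1 D ⊆ {y : H | ⟪u, y⟫ ≤ sSup S} :=
    closure_minimal (convexHull_min hC hconv) hclosed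
  exact hsub hx

lemma rec_bound {A t : ℝ} (m : ℕ) (hA : 0 < A) (ht : 0 ≤ t) (htm : t * (1 + (m : ℝ)) ≤ A) :
    t - t ^ 2 / A ≤ A / (2 + (m : ℝ)) := by
  have h1 : (0 : ℝ) < 2 + (m : ℝ) := by positivity
  have e1 : t - t ^ 2 / A = (t * A - t ^ 2) / A := by field_simp
  rw [e1, div_le_div_iff₀ hA h1]
  nlinarith [sq_nonneg t, sq_nonneg (A - t * (1 + (m : ℝ))),
    mul_nonneg (mul_nonneg (by positivity : (0:ℝ) ≤ (m:ℝ)) ht)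
      (sub_nonneg.2 htm), (by positivity : (0:ℝ) ≤ (m:ℝ))]

end Aux

set_option maxHeartbeats 1000000 in
/-- Stability of the Orthogonal Greedy Algorithm for noisy data: if `‖f - f^ε‖ ≤ ε` and
`f^ε/B ∈ A₁(D)`, then the OGA applied to `f` satisfies
`‖f_m‖ ≤ max{2ε, 4(B+ε)(1+m)^{-1/2}}` for every `m ≥ 1`. -/
theorem stmt_5 {H : Type*} [NormedAddCommGroup H] [InnerProductSpace ℝ H] [CompleteSpace H]
    (D : Set H)
    (hDnorm : ∀ g ∈ D, ‖g‖ = 1) (hDsymm : ∀ g ∈ D, -g ∈ D)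
    (hDspan : (Submodule.span ℝ D).topologicalClosure = ⊤)
    (ε : ℝ) (hε : 0 ≤ ε) (B : ℝ) (hB : 0 < B)
    (f₀ fε : H) (hnoise : ‖f₀ - fε‖ ≤ ε) (hfε : B⁻¹ • fε ∈ A1 D)
    (f : ℕ → H) (φ : ℕ → H)
    (hf0 : f 0 = f₀)
    (hφD : ∀ m : ℕ, φ (m + 1) ∈ D)
    (hgreedy : ∀ m : ℕ,
      |⟪f m, φ (m + 1)⟫| = sSup {r : ℝ | ∃ g ∈ D, r = |⟪f m, g⟫|})
    (hproj : ∀ m : ℕ, 1 ≤ m → f m = f₀ - projSpan φ m f₀) :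
    ∀ m : ℕ, 1 ≤ m →
      ‖f m‖ ≤ max (2 * ε) (4 * (B + ε) * (1 + (m : ℝ)) ^ (-(1/2) : ℝ)) := by
  -- D is nonempty
  have hDne : D.Nonempty := by
    by_contra h
    rw [Set.not_nonempty_iff_eq_empty] at h
    simp [A1, h] at hfε
  have hfεB : ‖fε‖ ≤ B := by
    have h1 : ‖B⁻¹ • fε‖ ≤ 1 := A1_norm_le D hDnorm hfε
    rw [norm_smul, Real.norm_eq_abs, abs_of_pos (inv_pos.2 hB)] at h1
    have h2 := mul_le_mul_of_nonneg_left h1 hB.le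
    rwa [mul_one, ← mul_assoc, mul_inv_cancel₀ (ne_of_gt hB), one_mul] at h2
  have hf₀ : ‖f₀‖ ≤ B + ε := by
    calc ‖f₀‖ = ‖fε + (f₀ - fε)‖ := by congr 1; abel
      _ ≤ ‖fε‖ + ‖f₀ - fε‖ := norm_add_le _ _
      _ ≤ B + ε := add_le_add hfεB hnoise
  set A := 16 * (B + ε) ^ 2 with hAdef
  have hApos : 0 < A := by positivity
  have hprojAll : ∀ m, f m = f₀ - projSpan φ m f₀ := by
    intro m
    rcases Nat.eq_zero_or_pos m with rfl | hm
    · rw [hf0, projSpan_zero, sub_zero]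
    · exact hproj m hm
  have horth : ∀ m, ⟪f m, f₀⟫ = ‖f m‖ ^ 2 := by
    intro m
    have h := hprojAll m
    have h0 : ⟪f m, projSpan φ m f₀⟫ = 0 := by
      rw [h]; exact projSpan_inner φ m f₀ (projSpan_mem φ m f₀)
    have hsplit : f₀ = f m + projSpan φ m f₀ := by rw [h]; abel
    calc ⟪f m, f₀⟫ = ⟪f m, f m + projSpan φ m f₀⟫ := by rw [← hsplit]
      _ = ⟪f m, f m⟫ + ⟪f m, projSpan φ m f₀⟫ := inner_add_right _ _ _
      _ = ‖f m‖ ^ 2 := by rw [h0, add_zero, real_inner_self_eq_norm_sq]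
  have hdec : ∀ m, ‖f (m + 1)‖ ^ 2 ≤ ‖f m‖ ^ 2 - ⟪f m, φ (m + 1)⟫ ^ 2 := by
    intro m
    set c := ⟪f m, φ (m + 1)⟫ with hcdef
    have hφmem : φ (m + 1) ∈ Submodule.span ℝ (φ '' Set.Icc 1 (m + 1)) :=
      Submodule.subset_span ⟨m + 1, ⟨Nat.one_le_iff_ne_zero.2 (Nat.succ_ne_zero m), le_refl _⟩, rfl⟩
    have hmono : Submodule.span ℝ (φ '' Set.Icc 1 m) ≤ Submodule.span ℝ (φ '' Set.Icc 1 (m + 1)) :=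
      Submodule.span_mono (Set.image_mono (Set.Icc_subset_Icc_right (Nat.le_succ m)))
    have hy : projSpan φ m f₀ + c • φ (m + 1) ∈ Submodule.span ℝ (φ '' Set.Icc 1 (m + 1)) :=
      Submodule.add_mem _ (hmono (projSpan_mem φ m f₀)) (Submodule.smul_mem _ _ hφmem)
    have h1 : ‖f (m + 1)‖ ≤ ‖f₀ - (projSpan φ m f₀ + c • φ (m + 1))‖ := by
      rw [hprojAll (m + 1)]; exact projSpan_min φ (m + 1) f₀ hy
    have h2 : f₀ - (projSpan φ m f₀ + c • φ (m + 1)) = f m - c • φ (m + 1) := by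
      rw [hprojAll m]; abel
    have h3 : ‖f m - c • φ (m + 1)‖ ^ 2 = ‖f m‖ ^ 2 - c ^ 2 := by
      rw [norm_sub_sq_real, real_inner_smul_right, norm_smul, Real.norm_eq_abs,
        hDnorm _ (hφD m), mul_one, ← hcdef, sq_abs]
      ring
    rw [h2] at h1
    nlinarith [norm_nonneg (f (m + 1)), norm_nonneg (f m - c • φ (m + 1))]
  have hmono : ∀ m, ‖f (m + 1)‖ ≤ ‖f m‖ := by
    intro m
    nlinarith [hdec m, sq_nonneg ⟪f m, φ (m + 1)⟫, norm_nonneg (f (m + 1)), norm_nonneg (f m)]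
  have hkey : ∀ m, 2 * ε ≤ ‖f m‖ → ‖f (m + 1)‖ ^ 2 ≤ ‖f m‖ ^ 2 - (‖f m‖ ^ 2) ^ 2 / A := by
    intro m hm
    have hsup : ⟪f m, B⁻¹ • fε⟫ ≤ sSup {r : ℝ | ∃ g ∈ D, r = |⟪f m, g⟫|} :=
      inner_le_sSup_abs D hDnorm (f m) hfε
    rw [← hgreedy m, real_inner_smul_right] at hsup
    have h2 : ⟪f m, fε⟫ ≤ B * |⟪f m, φ (m + 1)⟫| := by
      have := mul_le_mul_of_nonneg_left hsup (le_of_lt hB)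
      rwa [← mul_assoc, mul_inv_cancel₀ (ne_of_gt hB), one_mul] at this
    have h3 : ⟪f m, f₀ - fε⟫ ≤ ‖f m‖ * ε := by
      calc ⟪f m, f₀ - fε⟫ ≤ ‖f m‖ * ‖f₀ - fε‖ := real_inner_le_norm _ _
        _ ≤ ‖f m‖ * ε := mul_le_mul_of_nonneg_left hnoise (norm_nonneg _)
    have h4 : ⟪f m, fε⟫ = ⟪f m, f₀⟫ - ⟪f m, f₀ - fε⟫ := by
      rw [inner_sub_right]; ring
    have h5 : ‖f m‖ ^ 2 / 2 ≤ B * |⟪f m, φ (m + 1)⟫| := by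
      nlinarith [horth m]
    have h6 : (‖f m‖ ^ 2) ^ 2 / A ≤ ⟪f m, φ (m + 1)⟫ ^ 2 := by
      have hd : ‖f m‖ ^ 2 / (2 * B) ≤ |⟪f m, φ (m + 1)⟫| := by
        rw [div_le_iff₀ (by positivity)]
        nlinarith
      have h7 : (‖f m‖ ^ 2 / (2 * B)) ^ 2 ≤ ⟪f m, φ (m + 1)⟫ ^ 2 := by
        rw [← sq_abs ⟪f m, φ (m + 1)⟫]
        exact pow_le_pow_left₀ (by positivity) hd 2
      calc (‖f m‖ ^ 2) ^ 2 / A ≤ (‖f m‖ ^ 2) ^ 2 / (4 * B ^ 2) := by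
            apply div_le_div_of_nonneg_left (by positivity) (by positivity)
            rw [hAdef]; nlinarith
        _ = (‖f m‖ ^ 2 / (2 * B)) ^ 2 := by rw [div_pow]; congr 1; ring
        _ ≤ ⟪f m, φ (m + 1)⟫ ^ 2 := h7
    linarith [hdec m]
  have hind : ∀ m : ℕ, ‖f m‖ ^ 2 ≤ max (4 * ε ^ 2) (A / (1 + (m : ℝ))) := by
    intro m
    induction m with
    | zero =>
      refine le_max_of_le_right ?_
      rw [hf0]
      push_cast
      rw [hAdef]
      nlinarith [norm_nonneg f₀]
    | succ m ih =>
      rcases le_or_gt (2 * ε) ‖f m‖ with hge | hlt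
      · rcases le_max_iff.1 ih with h1 | h1
        · exact le_max_of_le_left
            (by nlinarith [hmono m, norm_nonneg (f m), norm_nonneg (f (m + 1))])
        · refine le_max_of_le_right ?_
          have hk := hkey m hge
          have htm : ‖f m‖ ^ 2 * (1 + (m : ℝ)) ≤ A := by
            rw [le_div_iff₀ (by positivity)] at h1
            linarith
          have hr := rec_bound (A := A) (t := ‖f m‖ ^ 2) m hApos (sq_nonneg _) htm
          push_cast
          calc ‖f (m + 1)‖ ^ 2 ≤ ‖f m‖ ^ 2 - (‖f m‖ ^ 2) ^ 2 / A := hk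
            _ ≤ A / (2 + (m : ℝ)) := hr
            _ ≤ A / (1 + ((m : ℝ) + 1)) := by
                apply div_le_div_of_nonneg_left (le_of_lt hApos) (by positivity)
                linarith
      · exact le_max_of_le_left
          (by nlinarith [hmono m, norm_nonneg (f (m + 1)), norm_nonneg (f m)])
  intro m hm
  have h := hind m
  set c := 4 * (B + ε) * (1 + (m : ℝ)) ^ (-(1/2) : ℝ) with hc
  have hm1 : (0 : ℝ) < 1 + (m : ℝ) := by positivity
  have hc0 : 0 ≤ c := by
    rw [hc]
    positivity
  have hcsq : c ^ 2 = A / (1 + (m : ℝ)) := by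
    have hnum : (-(1/2) : ℝ) * ((2:ℕ) : ℝ) = -1 := by norm_num
    have h2 : ((1 + (m : ℝ)) ^ (-(1/2) : ℝ)) ^ (2:ℕ) = (1 + (m : ℝ))⁻¹ := by
      rw [← Real.rpow_natCast ((1 + (m : ℝ)) ^ (-(1/2) : ℝ)) 2, ← Real.rpow_mul (le_of_lt hm1),
        hnum, Real.rpow_neg_one]
    rw [hc, mul_pow, h2, hAdef]
    field_simp
    ring
  have hfin : ‖f m‖ ^ 2 ≤ (max (2 * ε) c) ^ 2 := by
    rcases le_total (2 * ε) c with hle | hle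
    · rw [max_eq_right hle, hcsq]
      refine h.trans (max_le ?_ le_rfl)
      have : (2 * ε) ^ 2 ≤ c ^ 2 := pow_le_pow_left₀ (by positivity) hle 2
      rw [hcsq] at this
      nlinarith
    · rw [max_eq_left hle]
      refine h.trans (max_le (by nlinarith [hε, hc0, hle]) ?_)
      rw [← hcsq]
      nlinarith [hc0, hle, hε]
  calc ‖f m‖ = Real.sqrt (‖f m‖ ^ 2) := (Real.sqrt_sq (norm_nonneg _)).symm
    _ ≤ Real.sqrt ((max (2 * ε) c) ^ 2) := Real.sqrt_le_sqrt hfin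
    _ = max (2 * ε) c := Real.sqrt_sq (le_trans hc0 (le_max_right _ _))
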